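/- arXiv:2509.20532 — 2 statements merged into one kernel-verified Lean document; each statement's English description precedes it below -/
import Mathlib

section
/- Let G be a group generated by X with 𝒫 = {P_1,…,P_n} ↪_h (G,X) and let 𝕂_r = 𝕂_r(G,X,⋃_i X_i,𝒫). For every D > 0 there exists r_D = r_D(D) ≥ D such that for all r > r_D, all integers q ∈ [r_D, r), and all vertices u, v ∈ hP_i in the depth-0 set of the coned-off horoball ℋ_r(hΓ(P_i,X_i)) with apex a: if a geodesic [u,v] in 𝕂_r penetrates ℋ_r(hΓ(P_i,X_i)) to depth at least r_D, then ∠_{π_q^r(a)}(π_q^r(u), π_q^r(v)) > D in the coned-off Cayley graph Γ̂(G,𝒫,𝒳). -/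
set_option autoImplicit false
set_option maxHeartbeats 1000000

noncomputable section

namespace GpQc

universe u

open SimpleGraph

/-! ### Basic metric notions on graphs -/

variable {V W : Type*}

/-- The graph metric, as a real number. -/
def gdist (Γ : SimpleGraph V) (a b : V) : ℝ := (Γ.dist a b : ℝ)

/-- A walk is a geodesic if no walk with the same endpoints is shorter. -/
def IsGeodesic (Γ : SimpleGraph V) {x y : V} (p : Γ.Walk x y) : Prop :=
  ∀ q : Γ.Walk x y, p.length ≤ q.length

/-- All geodesic triangles of `Γ` are `δ`-slim. -/
def SlimTriangles (Γ : SimpleGraph V) (δ : ℝ) : Prop :=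
  ∀ (x y z : V) (p : Γ.Walk x y) (q : Γ.Walk y z) (s : Γ.Walk x z),
    IsGeodesic Γ p → IsGeodesic Γ q → IsGeodesic Γ s →
      ∀ v ∈ p.support, ∃ w, (w ∈ q.support ∨ w ∈ s.support) ∧ gdist Γ v w ≤ δ

/-- Gromov hyperbolicity of a graph. -/
def GromovHyperbolic (Γ : SimpleGraph V) : Prop :=
  ∃ δ : ℝ, 0 ≤ δ ∧ SlimTriangles Γ δ

/-- The angle at `v` between `x` and `y`: the combinatorial length of a shortest
path from `x` to `y` avoiding `v` (`⊤` if there is none). -/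
def angle (Γ : SimpleGraph V) (v x y : V) : ℕ∞ :=
  sInf {n : ℕ∞ | ∃ p : Γ.Walk x y, v ∉ p.support ∧ (p.length : ℕ∞) = n}

/-- The angle at `v` between two walks issuing from `v`. -/
def pathAngle (Γ : SimpleGraph V) {v y z : V} (p : Γ.Walk v y) (q : Γ.Walk v z) : ℕ∞ :=
  angle Γ v (p.getVert 1) (q.getVert 1)

/-- `Γ` is fine at `v`: balls of the angle metric on the neighbours of `v` are finite. -/
def FineAt (Γ : SimpleGraph V) (v : V) : Prop :=
  ∀ x : V, Γ.Adj v x → ∀ n : ℕ, {y : V | Γ.Adj v y ∧ angle Γ v x y ≤ (n : ℕ∞)}.Finite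

/-- An extended natural number is greater than a real number (true at `⊤`). -/
def egt (a : ℕ∞) (r : ℝ) : Prop := ∀ n : ℕ, a = (n : ℕ∞) → r < n

/-- `(k,l)`-quasi-isometric embedding with respect to given distance functions. -/
def IsQIEmbD {α β : Type*} (dα : α → α → ℝ) (dβ : β → β → ℝ) (f : α → β) (k l : ℝ) : Prop :=
  ∀ a b : α, (1 / k) * dα a b - l ≤ dβ (f a) (f b) ∧ dβ (f a) (f b) ≤ k * dα a b + l

/-- `(k,l)`-quasi-isometric embedding between graphs. -/
def IsQIEmb (Γ : SimpleGraph V) (Δ : SimpleGraph W) (f : V → W) (k l : ℝ) : Prop :=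
  IsQIEmbD (gdist Γ) (gdist Δ) f k l

/-- Quasi-isometry between graphs, with image `c`-dense. -/
def IsQI (Γ : SimpleGraph V) (Δ : SimpleGraph W) (f : V → W) (k l c : ℝ) : Prop :=
  IsQIEmb Γ Δ f k l ∧ ∀ w : W, ∃ a : V, gdist Δ (f a) w ≤ c

/-- A walk is a `(k,l)`-quasi-geodesic: every subpath has length at most
`k` times the distance between its endpoints plus `l`. -/
def IsQuasiGeodesic (Γ : SimpleGraph V) {x y : V} (p : Γ.Walk x y) (k l : ℝ) : Prop :=
  ∀ i j : ℕ, i ≤ j → j ≤ p.length →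
    ((j : ℝ) - (i : ℝ)) ≤ k * gdist Γ (p.getVert i) (p.getVert j) + l

/-- A set of vertices is `lam`-quasiconvex: every geodesic between two of its points
stays in its `lam`-neighbourhood. -/
def QuasiconvexSet (Γ : SimpleGraph V) (S : Set V) (lam : ℝ) : Prop :=
  ∀ x ∈ S, ∀ y ∈ S, ∀ p : Γ.Walk x y, IsGeodesic Γ p →
    ∀ v ∈ p.support, ∃ s ∈ S, gdist Γ v s ≤ lam

/-- The supports of two walks are at Hausdorff distance at most `c`. -/
def SupClose {α : Type*} (Γ : SimpleGraph α) {x y x' y' : α}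
    (p : Γ.Walk x y) (q : Γ.Walk x' y') (c : ℝ) : Prop :=
  (∀ u ∈ p.support, ∃ v ∈ q.support, gdist Γ u v ≤ c) ∧
  (∀ v ∈ q.support, ∃ u ∈ p.support, gdist Γ u v ≤ c)

/-- Every step of the walk satisfies the binary predicate `Q`. -/
def WalkAll {α : Type*} {Γ : SimpleGraph α} {x y : α} (p : Γ.Walk x y)
    (Q : α → α → Prop) : Prop :=
  ∀ d ∈ p.darts, Q d.toProd.1 d.toProd.2

/-! ### Graphs with a group action -/

variable {G : Type u} [Group G]

/-- A graph together with an action of `G` by graph automorphisms. -/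
structure GGraph (G : Type u) [Group G] : Type (u + 1) where
  V : Type u
  graph : SimpleGraph V
  smul : G → V → V
  one_smul' : ∀ v, smul 1 v = v
  mul_smul' : ∀ g h v, smul (g * h) v = smul g (smul h v)
  adj_smul' : ∀ g a b, graph.Adj a b → graph.Adj (smul g a) (smul g b)

/-- The `G`-stabilizer of a vertex. -/
def GGraph.stab (A : GGraph G) (v : A.V) : Subgroup G where
  carrier := {g | A.smul g v = v}
  one_mem' := A.one_smul' v
  mul_mem' := by
    intro a b ha hb
    simp only [Set.mem_setOf_eq] at *
    rw [A.mul_smul', hb, ha]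
  inv_mem' := by
    intro g hg
    simp only [Set.mem_setOf_eq] at *
    calc A.smul g⁻¹ v = A.smul g⁻¹ (A.smul g v) := by rw [hg]
    _ = A.smul (g⁻¹ * g) v := (A.mul_smul' _ _ _).symm
    _ = v := by rw [inv_mul_cancel, A.one_smul']

/-- Vertices up to the `G`-action. -/
def GGraph.orbitSetoid (A : GGraph G) : Setoid A.V where
  r v w := ∃ g : G, A.smul g v = w
  iseqv := by
    constructor
    · exact fun v => ⟨1, A.one_smul' v⟩
    · rintro v w ⟨g, rfl⟩
      exact ⟨g⁻¹, by rw [← A.mul_smul', inv_mul_cancel, A.one_smul']⟩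
    · rintro u v w ⟨g, rfl⟩ ⟨h, rfl⟩
      exact ⟨h * g, A.mul_smul' _ _ _⟩

/-- The (setwise) stabilizer of an edge. -/
def GGraph.edgeStab (A : GGraph G) (a b : A.V) : Set G :=
  {g | (A.smul g a = a ∧ A.smul g b = b) ∨ (A.smul g a = b ∧ A.smul g b = a)}

/-- Vertices of an invariant set up to the action of a subgroup `H`. -/
def GGraph.suborbitSetoid (A : GGraph G) (H : Subgroup G) (S : Set A.V) : Setoid S where
  r v w := ∃ h ∈ H, A.smul h (v : A.V) = (w : A.V)
  iseqv := by
    constructor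
    · exact fun v => ⟨1, H.one_mem, A.one_smul' v⟩
    · rintro v w ⟨h, hH, hvw⟩
      refine ⟨h⁻¹, H.inv_mem hH, ?_⟩
      rw [← hvw, ← A.mul_smul', inv_mul_cancel, A.one_smul']
    · rintro u v w ⟨h, hH, huv⟩ ⟨h', hH', hvw⟩
      exact ⟨h' * h, H.mul_mem hH' hH, by rw [A.mul_smul', huv, hvw]⟩

/-- The conjugate subgroup `g P g⁻¹`. -/
def conjSubgroup (g : G) (P : Subgroup G) : Subgroup G :=
  P.map (MulAut.conj g).toMonoidHom

variable {ι : Type u}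

/-- `A` is a `(G,𝒫)`-graph. -/
def IsGPGraph (P : ι → Subgroup G) (A : GGraph G) : Prop :=
  A.graph.Connected ∧
  GromovHyperbolic A.graph ∧
  Finite (Quotient A.orbitSetoid) ∧
  (∀ v : A.V, (A.stab v : Set G).Finite ∨ ∃ (i : ι) (g : G), A.stab v = conjSubgroup g (P i)) ∧
  (∀ i : ι, ∃ v : A.V, A.stab v = P i) ∧
  (∀ a b : A.V, A.graph.Adj a b → (A.edgeStab a b).Finite) ∧
  (∀ v : A.V, ¬ (A.stab v : Set G).Finite → FineAt A.graph v)

/-- A `(G,𝒫)`-graph is thick. -/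
def IsThick (P : ι → Subgroup G) (A : GGraph G) : Prop :=
  ∃ (u₀ : A.V) (v : ι → A.V),
    A.stab u₀ = ⊥ ∧
    (∀ i, A.graph.Adj u₀ (v i) ∧ A.stab (v i) = P i) ∧
    (∃ S : Set G, S.Finite ∧ Subgroup.closure (S ∪ ⋃ i, (P i : Set G)) = ⊤ ∧
      ∀ s ∈ S, A.graph.Adj u₀ (A.smul s u₀)) ∧
    (∃ (m : ℕ) (u : Fin m → A.V),
      (∀ j, A.graph.Adj u₀ (u j)) ∧ (∀ j, (A.stab (u j) : Set G).Finite) ∧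
      ∀ w : A.V, (A.stab w : Set G).Finite →
        ∃ g : G, A.smul g u₀ = w ∨ ∃ j, A.smul g (u j) = w)

/-- `H` is a `(G,𝒫)`-quasiconvex subgroup of `G`. -/
def IsGPQuasiconvex (P : ι → Subgroup G) (H : Subgroup G) : Prop :=
  ∃ A : GGraph G, IsGPGraph P A ∧ ∃ L : A.graph.Subgraph,
    L.verts.Nonempty ∧ L.Connected ∧
    (∀ h ∈ H, ∀ v ∈ L.verts, A.smul h v ∈ L.verts) ∧
    (∀ h ∈ H, ∀ a b : A.V, L.Adj a b → L.Adj (A.smul h a) (A.smul h b)) ∧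
    (∃ k l : ℝ, 0 < k ∧ IsQIEmb L.coe A.graph (fun x => (x : A.V)) k l) ∧
    Finite (Quotient (A.suborbitSetoid H L.verts))

/-- `H` is a full `(G,𝒫)`-quasiconvex subgroup. -/
def IsFullGPQuasiconvex (P : ι → Subgroup G) (H : Subgroup G) : Prop :=
  IsGPQuasiconvex P H ∧
  ∀ (g : G) (i : ι), ¬ ((H ⊓ conjSubgroup g (P i) : Subgroup G) : Set G).Finite →
    H.relIndex (conjSubgroup g (P i)) ≠ 0

/-! ### Coned-off Cayley graphs and hyperbolically embedded collections -/

/-- The apices of the coned-off Cayley graph: left cosets of members of the family. -/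
abbrev Coset (P : ι → Subgroup G) : Type u := Σ i : ι, G ⧸ P i

/-- Vertices of the coned-off Cayley graph. -/
abbrev ConedV (G : Type u) [Group G] {ι : Type u} (P : ι → Subgroup G) : Type u :=
  G ⊕ Coset P

/-- Basic edge relation for the coned-off Cayley graph. -/
def conedRel (P : ι → Subgroup G) (X : Set G) : ConedV G P → ConedV G P → Prop
  | Sum.inl g, Sum.inl h => ∃ x ∈ X, h = g * x
  | Sum.inl g, Sum.inr p => p.2 = QuotientGroup.mk g
  | Sum.inr _, _ => False

/-- The coned-off Cayley graph `Γ̂(G,𝒫,X)`. -/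
def conedCayley (G : Type u) [Group G] {ι : Type u} (P : ι → Subgroup G) (X : Set G) :
    SimpleGraph (ConedV G P) :=
  SimpleGraph.fromRel (conedRel P X)

/-- The family `P` is hyperbolically embedded in `G` with respect to `X`:
the coned-off Cayley graph is connected, hyperbolic and fine at every apex. -/
def HypEmb (P : ι → Subgroup G) (X : Set G) : Prop :=
  (conedCayley G P X).Connected ∧ GromovHyperbolic (conedCayley G P X) ∧
    ∀ c : Coset P, FineAt (conedCayley G P X) (Sum.inr c)

/-- The natural `G`-action on the vertices of the coned-off Cayley graph. -/
def conedSmul (P : ι → Subgroup G) (g : G) : ConedV G P → ConedV G P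
  | Sum.inl h => Sum.inl (g * h)
  | Sum.inr c => Sum.inr ⟨c.1, g • c.2⟩

lemma conedSmul_leftInverse (P : ι → Subgroup G) (g : G) :
    Function.LeftInverse (conedSmul P g⁻¹) (conedSmul P g) := by
  rintro (h | c)
  · simp [conedSmul, mul_assoc]
  · simp [conedSmul]

lemma conedRel_smul (P : ι → Subgroup G) (X : Set G) (g : G) {a b : ConedV G P}
    (h : conedRel P X a b) : conedRel P X (conedSmul P g a) (conedSmul P g b) := by
  match a, b with
  | Sum.inl x, Sum.inl y =>
      obtain ⟨s, hs, rfl⟩ := h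
      exact ⟨s, hs, (mul_assoc g x s).symm⟩
  | Sum.inl x, Sum.inr c =>
      simp only [conedRel] at h ⊢
      simp [conedSmul, h]
  | Sum.inr c, _ => exact h.elim

/-- The coned-off Cayley graph as a `G`-graph. -/
def conedGGraph (P : ι → Subgroup G) (X : Set G) : GGraph G where
  V := ConedV G P
  graph := conedCayley G P X
  smul g v := conedSmul P g v
  one_smul' := by rintro (h | c) <;> simp [conedSmul]
  mul_smul' := by rintro g g' (h | c) <;> simp [conedSmul, mul_assoc, mul_smul]
  adj_smul' := by
    rintro g a b hab
    unfold conedCayley at hab ⊢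
    rw [SimpleGraph.fromRel_adj] at hab ⊢
    obtain ⟨hne, h⟩ := hab
    refine ⟨fun he => hne ((conedSmul_leftInverse P g).injective he), ?_⟩
    rcases h with h | h
    · exact Or.inl (conedRel_smul P X g h)
    · exact Or.inr (conedRel_smul P X g h)

/-! ### Word length, horoballs, cusped Cayley graphs -/

/-- Word length of `g` over the (symmetrized) alphabet `S`. -/
def wlen (S : Set G) (g : G) : ℕ∞ :=
  sInf {n : ℕ∞ | ∃ L : List G, (∀ x ∈ L, x ∈ S ∨ x⁻¹ ∈ S) ∧ L.prod = g ∧ (L.length : ℕ∞) = n}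

/-- Basic edge relation of the combinatorial horoball over a graph. -/
def horoRel (Γ : SimpleGraph V) : V × ℕ → V × ℕ → Prop := fun a b =>
  (a.1 = b.1 ∧ b.2 = a.2 + 1) ∨
  (a.2 = b.2 ∧ a.1 ≠ b.1 ∧ Γ.Reachable a.1 b.1 ∧ Γ.dist a.1 b.1 ≤ 2 ^ a.2)

/-- The combinatorial horoball `ℋ(Γ)`. -/
def horoball (Γ : SimpleGraph V) : SimpleGraph (V × ℕ) :=
  SimpleGraph.fromRel (horoRel Γ)

/-- Basic edge relation of the coned-off horoball `ℋ_r(Γ)`; `none` is the apex. -/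
def conedHoroRel (Γ : SimpleGraph V) (r : ℕ) :
    Option (V × ℕ) → Option (V × ℕ) → Prop
  | some a, some b => horoRel Γ a b
  | some a, none => r ≤ a.2
  | none, _ => False

/-- The coned-off combinatorial horoball `ℋ_r(Γ)`. -/
def conedHoroball (Γ : SimpleGraph V) (r : ℕ) : SimpleGraph (Option (V × ℕ)) :=
  SimpleGraph.fromRel (conedHoroRel Γ r)

/-- A pair of vertices of a coned-off horoball spanning a vertical edge. -/
def IsVertPair : Option (V × ℕ) → Option (V × ℕ) → Prop
  | some a, some b => a.1 = b.1 ∧ (b.2 = a.2 + 1 ∨ a.2 = b.2 + 1)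
  | _, _ => False

/-- A pair of vertices of a coned-off horoball spanning a horizontal edge. -/
def IsHorizPair : Option (V × ℕ) → Option (V × ℕ) → Prop
  | some a, some b => a.2 = b.2 ∧ a.1 ≠ b.1
  | _, _ => False

/-- A pair of vertices spanning a cone edge (one of them is the apex). -/
def IsConePair : Option (V × ℕ) → Option (V × ℕ) → Prop := fun a b =>
  a = none ∨ b = none

/-- Vertical pairs in the plain horoball. -/
def IsVertPair' : V × ℕ → V × ℕ → Prop := fun a b =>
  a.1 = b.1 ∧ (b.2 = a.2 + 1 ∨ a.2 = b.2 + 1)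

/-- Horizontal pairs in the plain horoball. -/
def IsHorizPair' : V × ℕ → V × ℕ → Prop := fun a b =>
  a.2 = b.2 ∧ a.1 ≠ b.1

/-- The Groves–Manning shape of geodesics in a coned-off horoball: at most two
vertical segments together with either a single horizontal segment of length at
most `3` or at most two cone edges. -/
def GMShape {Γ : SimpleGraph V} {r : ℕ} {x y : Option (V × ℕ)}
    (p : (conedHoroball Γ r).Walk x y) : Prop :=
  ∃ (a b : Option (V × ℕ)) (p₁ : (conedHoroball Γ r).Walk x a)
    (p₂ : (conedHoroball Γ r).Walk a b) (p₃ : (conedHoroball Γ r).Walk b y),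
    p = (p₁.append p₂).append p₃ ∧
    WalkAll p₁ IsVertPair ∧ WalkAll p₃ IsVertPair ∧
    ((WalkAll p₂ IsHorizPair ∧ p₂.length ≤ 3) ∨ (WalkAll p₂ IsConePair ∧ p₂.length ≤ 2))

/-- Vertices of the coned-off cusped Cayley graph `𝕂_r(G,X,⋃ᵢXᵢ,𝒫)`:
group elements (depth 0), horoball vertices of positive depth, and apices. -/
abbrev CuspV (G : Type u) [Group G] {ι : Type u} (P : ι → Subgroup G) : Type u :=
  G ⊕ ((Σ _i : ι, G × ℕ+) ⊕ Coset P)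

/-- Basic edge relation of the coned-off cusped Cayley graph. -/
def cuspRel (P : ι → Subgroup G) (X : Set G) (Xi : ι → Set G) (r : ℕ) :
    CuspV G P → CuspV G P → Prop
  | Sum.inl g, Sum.inl h => (∃ x ∈ X, h = g * x) ∨ ∃ i, ∃ x ∈ Xi i, h = g * x
  | Sum.inl g, Sum.inr (Sum.inl d) => d.2.1 = g ∧ d.2.2 = 1
  | Sum.inl g, Sum.inr (Sum.inr c) => r = 0 ∧ c.2 = QuotientGroup.mk g
  | Sum.inr (Sum.inl d), Sum.inr (Sum.inl e) =>
      d.1 = e.1 ∧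
      ((d.2.1 = e.2.1 ∧ (e.2.2 : ℕ) = (d.2.2 : ℕ) + 1) ∨
       (d.2.2 = e.2.2 ∧ d.2.1 ≠ e.2.1 ∧ d.2.1⁻¹ * e.2.1 ∈ P e.1 ∧
         wlen (Xi e.1) (d.2.1⁻¹ * e.2.1) ≤ ((2 ^ (d.2.2 : ℕ) : ℕ) : ℕ∞)))
  | Sum.inr (Sum.inl d), Sum.inr (Sum.inr c) =>
      d.1 = c.1 ∧ r ≤ (d.2.2 : ℕ) ∧ c.2 = QuotientGroup.mk d.2.1
  | Sum.inr _, Sum.inl _ => False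
  | Sum.inr (Sum.inr _), Sum.inr _ => False

/-- The coned-off cusped Cayley graph `𝕂_r(G,X,⋃ᵢXᵢ,𝒫)`. -/
def cusped (G : Type u) [Group G] {ι : Type u} (P : ι → Subgroup G)
    (X : Set G) (Xi : ι → Set G) (r : ℕ) : SimpleGraph (CuspV G P) :=
  SimpleGraph.fromRel (cuspRel P X Xi r)

/-- The depth of a vertex of `𝕂_r`; the apices are declared to have depth `r+1`. -/
def cuspDepth {P : ι → Subgroup G} (r : ℕ) : CuspV G P → ℕ
  | Sum.inl _ => 0
  | Sum.inr (Sum.inl d) => (d.2.2 : ℕ)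
  | Sum.inr (Sum.inr _) => r + 1

/-- Membership of a vertex of `𝕂_r` in the (closed) horoball over the coset `c`. -/
def inHoro (P : ι → Subgroup G) (c : Coset P) : CuspV G P → Prop
  | Sum.inl g => c.2 = QuotientGroup.mk g
  | Sum.inr (Sum.inl d) => (⟨d.1, QuotientGroup.mk d.2.1⟩ : Coset P) = c
  | Sum.inr (Sum.inr c') => c' = c

/-- The coned-off `L`-horoball: the apex together with all vertices of the
horoball over `c` of depth at least `L`. -/
def LHoroball (P : ι → Subgroup G) (r : ℕ) (c : Coset P) (L : ℕ) : Set (CuspV G P) :=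
  {v | inHoro P c v ∧ L ≤ cuspDepth r v}

/-! ### The maps `π_q^r` and `ι_q^r` -/

/-- Points of the geometric realization of the coned-off Cayley graph used as targets
of `π_q^r`: vertices, together with interior points of cone edges. The interior point
`⟨i, g, t⟩` lies on the cone edge from `g` to the apex `gPᵢ`, at distance `t` from `g`. -/
abbrev ConePt (G : Type u) [Group G] {ι : Type u} (P : ι → Subgroup G) : Type u :=
  ConedV G P ⊕ (Σ _i : ι, G × {t : ℝ // 0 < t ∧ t < 1})

/-- The path metric on `ConePt`. -/
def conePtDist (P : ι → Subgroup G) (X : Set G) : ConePt G P → ConePt G P → ℝ :=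
  fun A B =>
    match A, B with
    | Sum.inl a, Sum.inl b => gdist (conedCayley G P X) a b
    | Sum.inl a, Sum.inr e =>
        min (gdist (conedCayley G P X) a (Sum.inl e.2.1) + (e.2.2 : ℝ))
            (gdist (conedCayley G P X) a (Sum.inr ⟨e.1, QuotientGroup.mk e.2.1⟩) +
              (1 - (e.2.2 : ℝ)))
    | Sum.inr e, Sum.inl b =>
        min ((e.2.2 : ℝ) + gdist (conedCayley G P X) (Sum.inl e.2.1) b)
            ((1 - (e.2.2 : ℝ)) +
              gdist (conedCayley G P X) (Sum.inr ⟨e.1, QuotientGroup.mk e.2.1⟩) b)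
    | Sum.inr e, Sum.inr f =>
        @ite _ ((⟨e.1, e.2.1⟩ : Σ _i : ι, G) = ⟨f.1, f.2.1⟩) (Classical.dec _)
          (min (baseDist P X e f) |(e.2.2 : ℝ) - (f.2.2 : ℝ)|)
          (baseDist P X e f)
where baseDist (P : ι → Subgroup G) (X : Set G)
    (e f : Σ _i : ι, G × {t : ℝ // 0 < t ∧ t < 1}) : ℝ :=
    min (min ((e.2.2 : ℝ) + gdist (conedCayley G P X) (Sum.inl e.2.1) (Sum.inl f.2.1) + (f.2.2 : ℝ))
             ((e.2.2 : ℝ) + gdist (conedCayley G P X) (Sum.inl e.2.1)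
                (Sum.inr ⟨f.1, QuotientGroup.mk f.2.1⟩) + (1 - (f.2.2 : ℝ))))
        (min ((1 - (e.2.2 : ℝ)) + gdist (conedCayley G P X)
                (Sum.inr ⟨e.1, QuotientGroup.mk e.2.1⟩) (Sum.inl f.2.1) + (f.2.2 : ℝ))
             ((1 - (e.2.2 : ℝ)) + gdist (conedCayley G P X)
                (Sum.inr ⟨e.1, QuotientGroup.mk e.2.1⟩)
                (Sum.inr ⟨f.1, QuotientGroup.mk f.2.1⟩) + (1 - (f.2.2 : ℝ))))

/-- The map `π_q^r` from the vertices of `𝕂_r` to the realization of the coned-off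
Cayley graph: depth-0 vertices and apices go to the corresponding vertices; a vertex of
depth `d ≥ q` in a horoball goes to the corresponding apex; a vertex of depth
`0 < d < q` over the coset element `g` goes to the point of the cone edge of `g` at
distance `d/q` from `g`. -/
def piMap (P : ι → Subgroup G) (q : ℕ) (hq : 0 < q) : CuspV G P → ConePt G P
  | Sum.inl g => Sum.inl (Sum.inl g)
  | Sum.inr (Sum.inr c) => Sum.inl (Sum.inr c)
  | Sum.inr (Sum.inl d) =>
      if h : q ≤ (d.2.2 : ℕ) then Sum.inl (Sum.inr ⟨d.1, QuotientGroup.mk d.2.1⟩)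
      else
        Sum.inr ⟨d.1, (d.2.1,
          ⟨(((d.2.2 : ℕ) : ℝ)) / ((q : ℕ) : ℝ),
            div_pos (by exact_mod_cast d.2.2.pos) (by exact_mod_cast hq),
            (div_lt_one (by exact_mod_cast hq)).mpr (by exact_mod_cast Nat.lt_of_not_le h)⟩)⟩

/-- The map `ι_q^r` on vertices: vertices of the Cayley graph are sent to themselves
and apices to the corresponding apices of the coned-off horoballs. -/
def iotaMap (P : ι → Subgroup G) : ConedV G P → CuspV G P
  | Sum.inl g => Sum.inl g
  | Sum.inr c => Sum.inr (Sum.inr c)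

/-! ### Dehn fillings -/

/-- The kernel of the Dehn filling determined by `N`. -/
def fillingKernel (N : ι → Subgroup G) : Subgroup G :=
  Subgroup.normalClosure (⋃ i, (N i : Set G))

/-- `N` is a normal subgroup of `P`. -/
def IsNormalIn (N P : Subgroup G) : Prop :=
  N ≤ P ∧ ∀ p ∈ P, ∀ x ∈ N, p * x * p⁻¹ ∈ N

/-- The inclusion `H ≤ G` respects the peripheral structure `D` on `H`: every member of
`D` is conjugate in `G` into a member of `P`. -/
def RespectsPeriph (P : ι → Subgroup G) (H : Subgroup G) {κ : Type u}
    (D : κ → Subgroup ↥H) : Prop :=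
  ∀ j : κ, ∃ (c : G) (i : ι), (D j).map H.subtype ≤ conjSubgroup c (P i)

/-- The filling determined by `N` is an `H`-filling with respect to the peripheral
structure `D` on `H`. -/
def IsHFilling (P : ι → Subgroup G) (N : ι → Subgroup G) (H : Subgroup G) {κ : Type u}
    (D : κ → Subgroup ↥H) : Prop :=
  ∀ (g : G) (i : ι), ¬ ((H ⊓ conjSubgroup g (P i) : Subgroup G) : Set G).Finite →
    ∃ (s : ↥H) (j : κ),
      conjSubgroup g (N i) ≤ conjSubgroup (s : G) ((D j).map H.subtype)

/-- The kernel of the induced filling of `H`. -/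
def inducedKernel (H : Subgroup G) {κ : Type u} (D : κ → Subgroup ↥H)
    (c : κ → G) (sel : κ → ι) (N : ι → Subgroup G) : Subgroup ↥H :=
  Subgroup.normalClosure
    (⋃ j, ((Subgroup.comap H.subtype (conjSubgroup (c j) (N (sel j))) ⊓ D j : Subgroup ↥H) :
      Set ↥H))

instance fillingKernel_normal (N : ι → Subgroup G) : (fillingKernel N).Normal :=
  Subgroup.normalClosure_normal

instance inducedKernel_normal (H : Subgroup G) {κ : Type u} (D : κ → Subgroup ↥H)
    (c : κ → G) (sel : κ → ι) (N : ι → Subgroup G) :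
    (inducedKernel H D c sel N).Normal :=
  Subgroup.normalClosure_normal

/-- `f` is the extension of the inclusion `H ≤ G` to the coned-off Cayley graphs,
with respect to the conjugating elements `c` and the assignment `sel` of peripherals. -/
def IsExtensionOfInclusion (P : ι → Subgroup G) (H : Subgroup G) {κ : Type u}
    (D : κ → Subgroup ↥H) (c : κ → G) (sel : κ → ι)
    (f : ConedV ↥H D → ConedV G P) : Prop :=
  (∀ h : ↥H, f (Sum.inl h) = Sum.inl (h : G)) ∧
  (∀ (j : κ) (s : ↥H), f (Sum.inr ⟨j, QuotientGroup.mk s⟩) =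
      Sum.inr ⟨sel j, QuotientGroup.mk ((s : G) * c j)⟩)



section Aux

variable {G : Type u} [Group G] {ι : Type u}

lemma exists_word {X : Set G} (hX : Subgroup.closure X = ⊤) (g : G) :
    ∃ L : List G, (∀ x ∈ L, x ∈ X ∨ x⁻¹ ∈ X) ∧ L.prod = g := by
  have hg : g ∈ Subgroup.closure X := by rw [hX]; trivial
  induction hg using Subgroup.closure_induction with
  | mem x hx => exact ⟨[x], by simp [hx], by simp⟩
  | one => exact ⟨[], by simp, by simp⟩
  | mul x y hx hy ihx ihy =>
      obtain ⟨L1, h1, p1⟩ := ihx; obtain ⟨L2, h2, p2⟩ := ihy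
      exact ⟨L1 ++ L2, by
        intro z hz; rcases List.mem_append.1 hz with h | h
        exacts [h1 z h, h2 z h], by simp [p1, p2]⟩
  | inv x hx ih =>
      obtain ⟨L, h1, p1⟩ := ih
      refine ⟨(L.map (·⁻¹)).reverse, ?_, ?_⟩
      · intro z hz
        simp only [List.mem_reverse, List.mem_map] at hz
        obtain ⟨y, hy, rfl⟩ := hz
        rcases h1 y hy with h | h
        · exact Or.inr (by simpa using h)
        · exact Or.inl h
      · rw [← p1, ← List.prod_inv_reverse]

lemma conedCayley_adj (P : ι → Subgroup G) (X : Set G) (a b : ConedV G P) :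
    (conedCayley G P X).Adj a b ↔ a ≠ b ∧ (conedRel P X a b ∨ conedRel P X b a) :=
  SimpleGraph.fromRel_adj _ _ _

lemma cusped_adj (P : ι → Subgroup G) (X : Set G) (Xi : ι → Set G) (r : ℕ)
    (a b : CuspV G P) :
    (cusped G P X Xi r).Adj a b ↔ a ≠ b ∧ (cuspRel P X Xi r a b ∨ cuspRel P X Xi r b a) :=
  SimpleGraph.fromRel_adj _ _ _

/-- A walk in the coned-off Cayley graph spelled by a list of letters from `X`. -/
lemma conedWalk_of_list (P : ι → Subgroup G) (X : Set G) :
    ∀ (L : List G), (∀ x ∈ L, x ∈ X ∨ x⁻¹ ∈ X) → ∀ g : G,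
    ∃ w : (conedCayley G P X).Walk (Sum.inl g) (Sum.inl (g * L.prod)),
      w.length ≤ L.length ∧ ∀ u ∈ w.support, ∃ h : G, u = Sum.inl h := by
  intro L
  induction L with
  | nil =>
      intro _ g
      refine ⟨SimpleGraph.Walk.nil.copy rfl (by rw [List.prod_nil, mul_one]), ?_, ?_⟩
      · rw [SimpleGraph.Walk.length_copy]; simp
      · intro u hu
        rw [SimpleGraph.Walk.support_copy] at hu
        simp at hu
        exact ⟨g, hu⟩
  | cons x L ih =>
      intro hL g
      obtain ⟨w, hw1, hw2⟩ := ih (fun y hy => hL y (List.mem_cons_of_mem _ hy)) (g * x)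
      by_cases hx1 : x = 1
      · subst hx1
        refine ⟨w.copy (by rw [mul_one]) (by rw [List.prod_cons, one_mul, mul_one]), ?_, ?_⟩
        · rw [SimpleGraph.Walk.length_copy]
          exact hw1.trans (Nat.le_succ _)
        · intro u hu; rw [SimpleGraph.Walk.support_copy] at hu; exact hw2 u hu
      · have hadj : (conedCayley G P X).Adj (Sum.inl g) (Sum.inl (g * x)) := by
          rw [conedCayley_adj]
          refine ⟨?_, ?_⟩
          · intro h
            exact hx1 (by
              have h' : g = g * x := Sum.inl.inj h
              have := mul_eq_left (a := g) (b := x)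
              rw [← this]; exact h'.symm)
          · rcases hL x List.mem_cons_self with hx | hx
            · exact Or.inl ⟨x, hx, rfl⟩
            · exact Or.inr ⟨x⁻¹, hx, by rw [mul_assoc, mul_inv_cancel, mul_one]⟩
        refine ⟨(SimpleGraph.Walk.cons hadj w).copy rfl
          (by rw [List.prod_cons, mul_assoc]), ?_, ?_⟩
        · rw [SimpleGraph.Walk.length_copy, SimpleGraph.Walk.length_cons]
          simpa using hw1
        · intro u hu
          rw [SimpleGraph.Walk.support_copy, SimpleGraph.Walk.support_cons] at hu
          rcases List.mem_cons.1 hu with hu | hu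
          · exact ⟨g, hu⟩
          · exact hw2 u hu

/-- A walk in the cusped Cayley graph spelled by a list of letters from `X`. -/
lemma cuspedWalk_of_list (P : ι → Subgroup G) (X : Set G) (Xi : ι → Set G) (r : ℕ) :
    ∀ (L : List G), (∀ x ∈ L, x ∈ X ∨ x⁻¹ ∈ X) → ∀ g : G,
    ∃ w : (cusped G P X Xi r).Walk (Sum.inl g) (Sum.inl (g * L.prod)),
      w.length ≤ L.length := by
  intro L
  induction L with
  | nil =>
      intro _ g
      exact ⟨SimpleGraph.Walk.nil.copy rfl (by rw [List.prod_nil, mul_one]), by rw [SimpleGraph.Walk.length_copy]; simp⟩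
  | cons x L ih =>
      intro hL g
      obtain ⟨w, hw1⟩ := ih (fun y hy => hL y (List.mem_cons_of_mem _ hy)) (g * x)
      by_cases hx1 : x = 1
      · subst hx1
        refine ⟨w.copy (by rw [mul_one]) (by rw [List.prod_cons, one_mul, mul_one]), ?_⟩
        rw [SimpleGraph.Walk.length_copy]
        exact hw1.trans (Nat.le_succ _)
      · have hadj : (cusped G P X Xi r).Adj (Sum.inl g) (Sum.inl (g * x)) := by
          rw [cusped_adj]
          refine ⟨?_, ?_⟩
          · intro h
            exact hx1 (by
              have h' : g = g * x := Sum.inl.inj h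
              have := mul_eq_left (a := g) (b := x)
              rw [← this]; exact h'.symm)
          · rcases hL x List.mem_cons_self with hx | hx
            · exact Or.inl (Or.inl ⟨x, hx, rfl⟩)
            · exact Or.inr (Or.inl ⟨x⁻¹, hx, by rw [mul_assoc, mul_inv_cancel, mul_one]⟩)
        refine ⟨(SimpleGraph.Walk.cons hadj w).copy rfl
          (by rw [List.prod_cons, mul_assoc]), ?_⟩
        rw [SimpleGraph.Walk.length_copy, SimpleGraph.Walk.length_cons]
        simpa using hw1

end Aux

section Aux2

variable {G : Type u} [Group G] {ι : Type u}

lemma depth_rel (P : ι → Subgroup G) (X : Set G) (Xi : ι → Set G) (r rD : ℕ)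
    (hrD : rD ≤ r) (hr : 0 < r) {a b : CuspV G P} (h : cuspRel P X Xi r a b) :
    min (cuspDepth r b) rD ≤ min (cuspDepth r a) rD + 1 ∧
    min (cuspDepth r a) rD ≤ min (cuspDepth r b) rD + 1 := by
  match a, b with
  | Sum.inl g, Sum.inl h' => simp [cuspDepth]
  | Sum.inl g, Sum.inr (Sum.inl d) =>
      obtain ⟨-, h2⟩ := h
      have : (d.2.2 : ℕ) = 1 := by rw [h2]; rfl
      simp only [cuspDepth, this]
      omega
  | Sum.inl g, Sum.inr (Sum.inr c) => exact absurd h.1 (by omega)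
  | Sum.inr (Sum.inl d), Sum.inr (Sum.inl e) =>
      obtain ⟨-, h2⟩ := h
      rcases h2 with ⟨-, h2⟩ | ⟨h2, -⟩
      · simp only [cuspDepth, h2]
        omega
      · have : (d.2.2 : ℕ) = (e.2.2 : ℕ) := by rw [h2]
        simp only [cuspDepth, this]
        omega
  | Sum.inr (Sum.inl d), Sum.inr (Sum.inr c) =>
      obtain ⟨-, h2, -⟩ := h
      have h3 : rD ≤ (d.2.2 : ℕ) := hrD.trans h2
      simp only [cuspDepth]
      omega
  | Sum.inr (Sum.inl d), Sum.inl _ => exact h.elim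
  | Sum.inr (Sum.inr c), Sum.inl _ => exact h.elim
  | Sum.inr (Sum.inr c), Sum.inr _ => exact h.elim

lemma depth_adj (P : ι → Subgroup G) (X : Set G) (Xi : ι → Set G) (r rD : ℕ)
    (hrD : rD ≤ r) (hr : 0 < r) {a b : CuspV G P} (h : (cusped G P X Xi r).Adj a b) :
    min (cuspDepth r b) rD ≤ min (cuspDepth r a) rD + 1 := by
  rw [cusped_adj] at h
  rcases h.2 with h' | h'
  · exact (depth_rel P X Xi r rD hrD hr h').1
  · exact (depth_rel P X Xi r rD hrD hr h').2

lemma depth_walk (P : ι → Subgroup G) (X : Set G) (Xi : ι → Set G) (r rD : ℕ)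
    (hrD : rD ≤ r) (hr : 0 < r) {a b : CuspV G P} (p : (cusped G P X Xi r).Walk a b) :
    min (cuspDepth r b) rD ≤ min (cuspDepth r a) rD + p.length := by
  induction p with
  | nil => simp
  | cons hadj p ih =>
      rw [SimpleGraph.Walk.length_cons]
      have := depth_adj P X Xi r rD hrD hr hadj
      omega

end Aux2

section Aux3

variable {G : Type u} [Group G] {ι : Type u}

/-- Left translation as an automorphism of the coned-off Cayley graph. -/
def conedIso (P : ι → Subgroup G) (X : Set G) (g : G) :
    conedCayley G P X ≃g conedCayley G P X where
  toFun := conedSmul P g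
  invFun := conedSmul P g⁻¹
  left_inv := conedSmul_leftInverse P g
  right_inv := by
    have h := conedSmul_leftInverse P g⁻¹
    intro v
    have := h v
    rwa [inv_inv] at this
  map_rel_iff' := by
    intro a b
    constructor
    · intro h
      have h2 := (conedGGraph P X).adj_smul' g⁻¹ _ _ h
      simp only [Equiv.coe_fn_mk] at h2 ⊢
      simp only [conedGGraph] at h2
      rwa [conedSmul_leftInverse P g a, conedSmul_leftInverse P g b] at h2
    · exact (conedGGraph P X).adj_smul' g a b

lemma angle_iso {V' W' : Type*} {Γ : SimpleGraph V'} {Δ : SimpleGraph W'} (φ : Γ ≃g Δ)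
    (v x y : V') : angle Δ (φ v) (φ x) (φ y) = angle Γ v x y := by
  unfold angle
  congr 1
  ext n
  constructor
  · rintro ⟨p, hp, rfl⟩
    refine ⟨(p.map φ.symm.toHom).copy (by simp) (by simp), ?_, by simp⟩
    rw [SimpleGraph.Walk.support_copy, SimpleGraph.Walk.support_map]
    intro hv
    obtain ⟨u, hu, hu2⟩ := List.mem_map.1 hv
    apply hp
    have : u = φ v := by
      have := congrArg φ hu2
      simpa using this
    rwa [this] at hu
  · rintro ⟨p, hp, rfl⟩
    refine ⟨p.map φ.toHom, ?_, by simp⟩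
    rw [SimpleGraph.Walk.support_map]
    intro hv
    obtain ⟨u, hu, hu2⟩ := List.mem_map.1 hv
    apply hp
    have : u = v := φ.injective hu2
    rwa [this] at hu

end Aux3

section Aux4

variable {G : Type u} [Group G] {ι : Type u}

lemma edge_small_of_rel (P : ι → Subgroup G) (X : Set G) (Xi : ι → Set G) (C : ℕ)
    (hC : 1 ≤ C)
    (hrep : ∀ (g x : G), x ∈ (⋃ j, Xi j) →
      ∃ w : (conedCayley G P X).Walk (Sum.inl g) (Sum.inl (g * x)),
        w.length ≤ C ∧ ∀ u ∈ w.support, ∃ h : G, u = Sum.inl h)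
    {a b : ConedV G P} (hne : a ≠ b) (hrel : conedRel P (X ∪ ⋃ j, Xi j) a b) :
    ∃ w : (conedCayley G P X).Walk a b, w.length ≤ C ∧
      ∀ u ∈ w.support, u = a ∨ u = b ∨ ∃ h : G, u = Sum.inl h := by
  match a, b with
  | Sum.inl g, Sum.inl h' =>
      obtain ⟨x, hx, rfl⟩ := hrel
      rcases hx with hx | hx
      · have hadj : (conedCayley G P X).Adj (Sum.inl g) (Sum.inl (g * x)) := by
          rw [conedCayley_adj]
          exact ⟨hne, Or.inl ⟨x, hx, rfl⟩⟩
        refine ⟨SimpleGraph.Walk.cons hadj SimpleGraph.Walk.nil, by simpa using hC, ?_⟩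
        intro u hu
        simp only [SimpleGraph.Walk.support_cons, SimpleGraph.Walk.support_nil] at hu
        rcases List.mem_cons.1 hu with h | h
        · exact Or.inl h
        · exact Or.inr (Or.inl (by simpa using h))
      · obtain ⟨w, hw1, hw2⟩ := hrep g x hx
        exact ⟨w, hw1, fun u hu => Or.inr (Or.inr (hw2 u hu))⟩
  | Sum.inl g, Sum.inr c =>
      have hadj : (conedCayley G P X).Adj (Sum.inl g) (Sum.inr c) := by
        rw [conedCayley_adj]
        exact ⟨hne, Or.inl hrel⟩
      refine ⟨SimpleGraph.Walk.cons hadj SimpleGraph.Walk.nil, by simpa using hC, ?_⟩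
      intro u hu
      simp only [SimpleGraph.Walk.support_cons, SimpleGraph.Walk.support_nil] at hu
      rcases List.mem_cons.1 hu with h | h
      · exact Or.inl h
      · exact Or.inr (Or.inl (by simpa using h))
  | Sum.inr c, _ => exact hrel.elim

lemma walk_small_of_walk_big (P : ι → Subgroup G) (X : Set G) (Xi : ι → Set G) (C : ℕ)
    (hC : 1 ≤ C)
    (hrep : ∀ (g x : G), x ∈ (⋃ j, Xi j) →
      ∃ w : (conedCayley G P X).Walk (Sum.inl g) (Sum.inl (g * x)),
        w.length ≤ C ∧ ∀ u ∈ w.support, ∃ h : G, u = Sum.inl h)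
    {a b : ConedV G P} (π : (conedCayley G P (X ∪ ⋃ j, Xi j)).Walk a b) :
    ∃ w : (conedCayley G P X).Walk a b, w.length ≤ C * π.length ∧
      ∀ u ∈ w.support, u ∈ π.support ∨ ∃ h : G, u = Sum.inl h := by
  induction π with
  | nil =>
      exact ⟨SimpleGraph.Walk.nil, by simp, by
        intro u hu
        simp only [SimpleGraph.Walk.support_nil] at hu
        exact Or.inl (by simpa using hu)⟩
  | @cons a c b hadj rest ih =>
      obtain ⟨w2, hw21, hw22⟩ := ih
      have hadj' := hadj
      rw [conedCayley_adj] at hadj'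
      obtain ⟨hne, hrel⟩ := hadj'
      have hedge : ∃ w : (conedCayley G P X).Walk a c, w.length ≤ C ∧
          ∀ u ∈ w.support, u = a ∨ u = c ∨ ∃ h : G, u = Sum.inl h := by
        rcases hrel with h | h
        · exact edge_small_of_rel P X Xi C hC hrep hne h
        · obtain ⟨w, hw1, hw2⟩ := edge_small_of_rel P X Xi C hC hrep (Ne.symm hne) h
          refine ⟨w.reverse, by simpa using hw1, ?_⟩
          intro u hu
          rw [SimpleGraph.Walk.support_reverse, List.mem_reverse] at hu
          rcases hw2 u hu with h' | h' | h'
          · exact Or.inr (Or.inl h')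
          · exact Or.inl h'
          · exact Or.inr (Or.inr h')
      obtain ⟨w1, hw11, hw12⟩ := hedge
      refine ⟨w1.append w2, ?_, ?_⟩
      · rw [SimpleGraph.Walk.length_append, SimpleGraph.Walk.length_cons]
        calc w1.length + w2.length ≤ C + C * rest.length := Nat.add_le_add hw11 hw21
        _ = C * (rest.length + 1) := by ring
      · intro u hu
        rw [SimpleGraph.Walk.mem_support_append_iff] at hu
        rcases hu with hu | hu
        · rcases hw12 u hu with h' | h' | h'
          · exact Or.inl (by rw [h']; exact SimpleGraph.Walk.start_mem_support _)
          · exact Or.inl (by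
              rw [SimpleGraph.Walk.support_cons]
              exact List.mem_cons_of_mem _ (by rw [h']; exact SimpleGraph.Walk.start_mem_support _))
          · exact Or.inr h'
        · rcases hw22 u hu with h' | h'
          · exact Or.inl (by
              rw [SimpleGraph.Walk.support_cons]
              exact List.mem_cons_of_mem _ h')
          · exact Or.inr h'

end Aux4

/-- For every `D > 0` there is `r_D ≥ D` such that for all `r > r_D` and `q ∈ [r_D, r)`,
if a geodesic between two depth-0 vertices of a horoball penetrates it to depth at least
`r_D`, then the corresponding angle at the apex in the coned-off Cayley graph exceeds `D`. -/
theorem deep_penetration_big_angle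
    {G : Type u} [Group G] {ι : Type u} [Finite ι] (P : ι → Subgroup G)
    (hPinf : ∀ i, ((P i : Set G)).Infinite)
    (X : Set G) (hXgen : Subgroup.closure X = ⊤) (hPhe : HypEmb P X)
    (Xi : ι → Set G) (hXi : ∀ i, (Xi i).Finite ∧ Xi i ⊆ (P i : Set G)) :
    ∀ D : ℝ, 0 < D → ∃ rD : ℕ, D ≤ (rD : ℝ) ∧
      ∀ r : ℕ, rD < r → ∀ q : ℕ, rD ≤ q → q < r →
        ∀ (i : ι) (co : G ⧸ P i) (uu vv : G),
          QuotientGroup.mk uu = co → QuotientGroup.mk vv = co →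
          ∀ γ : (cusped G P X Xi r).Walk (Sum.inl uu) (Sum.inl vv),
            IsGeodesic (cusped G P X Xi r) γ →
            (∃ w ∈ γ.support, inHoro P ⟨i, co⟩ w ∧ rD ≤ cuspDepth r w) →
            egt (angle (conedCayley G P (X ∪ ⋃ j, Xi j)) (Sum.inr ⟨i, co⟩)
              (Sum.inl uu) (Sum.inl vv)) D := by
  classical
  intro D hD
  choose Lw hLw1 hLw2 using exists_word hXgen
  have hFfin : (⋃ j, Xi j).Finite := Set.finite_iUnion (fun j => (hXi j).1)
  set C : ℕ := max (hFfin.toFinset.sup (fun x => (Lw x).length)) 1 with hCdef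
  have hC1 : 1 ≤ C := le_max_right _ _
  have hrep : ∀ (g x : G), x ∈ (⋃ j, Xi j) →
      ∃ w : (conedCayley G P X).Walk (Sum.inl g) (Sum.inl (g * x)),
        w.length ≤ C ∧ ∀ u ∈ w.support, ∃ h : G, u = Sum.inl h := by
    intro g x hx
    obtain ⟨w, hw1, hw2⟩ := conedWalk_of_list P X (Lw x) (hLw1 x) g
    refine ⟨w.copy rfl (by rw [hLw2 x]), ?_, ?_⟩
    · rw [SimpleGraph.Walk.length_copy]
      refine hw1.trans (le_trans ?_ (le_max_left _ 1))
      exact Finset.le_sup (f := fun x => (Lw x).length) (hFfin.mem_toFinset.2 hx)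
    · intro u hu; rw [SimpleGraph.Walk.support_copy] at hu; exact hw2 u hu
  set m : ℕ := C * ⌈D⌉₊ with hm
  set F : ι → Set (ConedV G P) := fun i =>
    {y | (conedCayley G P X).Adj (Sum.inr ⟨i, QuotientGroup.mk 1⟩) y ∧
      angle (conedCayley G P X) (Sum.inr ⟨i, QuotientGroup.mk 1⟩) (Sum.inl 1) y ≤ (m : ℕ∞)}
    with hF
  have hFfin2 : ∀ i, (F i).Finite := by
    intro i
    have hadj : (conedCayley G P X).Adj (Sum.inr ⟨i, QuotientGroup.mk 1⟩)
        (Sum.inl (1 : G)) := by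
      rw [conedCayley_adj]
      exact ⟨by simp, Or.inr rfl⟩
    exact hPhe.2.2 ⟨i, QuotientGroup.mk 1⟩ (Sum.inl 1) hadj m
  have hUfin : (⋃ i, F i).Finite := Set.finite_iUnion hFfin2
  set ψ : ConedV G P → ℕ := Sum.elim (fun p => (Lw p).length) (fun _ => 0) with hψ
  obtain ⟨B, hB⟩ := (hUfin.image ψ).bddAbove
  set rD : ℕ := max (⌈D⌉₊ + 1) (B + 1) with hrDdef
  refine ⟨rD, ?_, ?_⟩
  · calc D ≤ (⌈D⌉₊ : ℝ) := Nat.le_ceil D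
      _ ≤ ((⌈D⌉₊ + 1 : ℕ) : ℝ) := by exact_mod_cast Nat.le_succ _
      _ ≤ (rD : ℝ) := by exact_mod_cast le_max_left _ _
  rintro r hr q hq1 hq2 i co uu vv huu hvv γ hgeo ⟨w, hwmem, -, hwdepth⟩
  intro n hn
  by_contra hnD
  push_neg at hnD
  have hn_le : n ≤ ⌈D⌉₊ := by
    have h' : (n : ℝ) ≤ (⌈D⌉₊ : ℝ) := hnD.trans (Nat.le_ceil D)
    exact_mod_cast h'
  set S' : Set G := X ∪ ⋃ j, Xi j with hS'
  set p : G := uu⁻¹ * vv with hp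
  set v₀ : ConedV G P := Sum.inr ⟨i, QuotientGroup.mk 1⟩ with hv₀
  -- translate the angle to the basepoint
  have him1 : (conedIso P S' uu⁻¹) (Sum.inr ⟨i, co⟩ : ConedV G P) = v₀ := by
    show (Sum.inr ⟨i, uu⁻¹ • co⟩ : ConedV G P) = v₀
    rw [← huu]
    have h' : uu⁻¹ • (QuotientGroup.mk uu : G ⧸ P i) = QuotientGroup.mk 1 := by
      show QuotientGroup.mk (uu⁻¹ * uu) = _
      rw [inv_mul_cancel]
    rw [hv₀]
    exact congrArg Sum.inr (congrArg (Sigma.mk i) h')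
  have him2 : (conedIso P S' uu⁻¹) (Sum.inl uu : ConedV G P) = Sum.inl (1 : G) := by
    show (Sum.inl (uu⁻¹ * uu) : ConedV G P) = _
    rw [inv_mul_cancel]
  have him3 : (conedIso P S' uu⁻¹) (Sum.inl vv : ConedV G P) = Sum.inl p := rfl
  have htrans : angle (conedCayley G P S') v₀ (Sum.inl 1) (Sum.inl p) = (n : ℕ∞) := by
    have h0 := angle_iso (conedIso P S' uu⁻¹) (Sum.inr ⟨i, co⟩ : ConedV G P)
      (Sum.inl uu) (Sum.inl vv)
    rw [him1, him2, him3] at h0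
    rw [h0]
    exact hn
  -- extract a short walk avoiding the apex
  have hlt : angle (conedCayley G P S') v₀ (Sum.inl 1) (Sum.inl p) < ((n + 1 : ℕ) : ℕ∞) := by
    rw [htrans]
    exact_mod_cast Nat.lt_succ_self n
  unfold angle at hlt
  obtain ⟨k, ⟨pw, hpw1, hpw2⟩, hk⟩ := sInf_lt_iff.1 hlt
  have hpwlen : pw.length ≤ n := by
    have h' : ((pw.length : ℕ) : ℕ∞) < ((n + 1 : ℕ) : ℕ∞) := by rw [hpw2]; exact hk
    exact Nat.lt_succ_iff.1 (by exact_mod_cast h')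
  -- convert to a walk in the small coned-off Cayley graph
  obtain ⟨wS, hwS1, hwS2⟩ := walk_small_of_walk_big P X Xi C hC1 hrep pw
  have hv₀S : v₀ ∉ wS.support := by
    intro h'
    rcases hwS2 _ h' with h'' | ⟨g, h''⟩
    · exact hpw1 h''
    · rw [hv₀] at h''; cases h''
  have hang : angle (conedCayley G P X) v₀ (Sum.inl 1) (Sum.inl p) ≤ (m : ℕ∞) := by
    unfold angle
    refine le_trans (sInf_le ⟨wS, hv₀S, rfl⟩) ?_
    have h' : wS.length ≤ m := by
      refine hwS1.trans ?_
      calc C * pw.length ≤ C * n := Nat.mul_le_mul_left _ hpwlen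
        _ ≤ C * ⌈D⌉₊ := Nat.mul_le_mul_left _ hn_le
    exact_mod_cast h'
  -- membership in the finite angle ball
  have hpPi : p ∈ P i := QuotientGroup.eq.1 (huu.trans hvv.symm)
  have hadjp : (conedCayley G P X).Adj v₀ (Sum.inl p) := by
    rw [conedCayley_adj]
    refine ⟨by simp [hv₀], Or.inr ?_⟩
    show (QuotientGroup.mk 1 : G ⧸ P i) = QuotientGroup.mk p
    exact QuotientGroup.eq.2 (by simpa using hpPi)
  have hmemF : (Sum.inl p : ConedV G P) ∈ F i := ⟨hadjp, hang⟩
  have hlenB : (Lw p).length ≤ B := by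
    have h' : ψ (Sum.inl p) ∈ ψ '' (⋃ i, F i) :=
      Set.mem_image_of_mem ψ (Set.mem_iUnion.2 ⟨i, hmemF⟩)
    exact hB h'
  -- the geodesic is short
  obtain ⟨wK, hwK⟩ := cuspedWalk_of_list P X Xi r (Lw p) (hLw1 p) uu
  have hγB : γ.length ≤ B := by
    have h' := hgeo (wK.copy rfl (by rw [hLw2 p, hp, mul_inv_cancel_left]))
    rw [SimpleGraph.Walk.length_copy] at h'
    exact h'.trans (hwK.trans hlenB)
  -- but the geodesic is long, since it penetrates deep
  have hr0 : 0 < r := lt_of_le_of_lt (Nat.zero_le _) hr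
  have hrDr : rD ≤ r := le_of_lt hr
  have hlen : (γ.takeUntil w hwmem).length + (γ.dropUntil w hwmem).length = γ.length := by
    rw [← SimpleGraph.Walk.length_append, γ.take_spec hwmem]
  have h1 := depth_walk P X Xi r rD hrDr hr0 (γ.takeUntil w hwmem)
  have h2 := depth_walk P X Xi r rD hrDr hr0 (γ.dropUntil w hwmem).reverse
  have hdw : min (cuspDepth r w) rD = rD := min_eq_right hwdepth
  have hd0u : cuspDepth r (Sum.inl uu : CuspV G P) = 0 := rfl
  have hd0v : cuspDepth r (Sum.inl vv : CuspV G P) = 0 := rfl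
  rw [hdw, hd0u] at h1
  rw [hdw, hd0v, SimpleGraph.Walk.length_reverse] at h2
  have hBrD : B + 1 ≤ rD := le_max_right _ _
  omega

end GpQc
end
end

section
/- Let G be a group and 𝒫 a finite collection of infinite subgroups of G with 𝒫 ↪_h G. If H ≤ G is (G,𝒫)-quasiconvex and H' is a finite index subgroup of H, then H' is also (G,𝒫)-quasiconvex. -/
set_option autoImplicit false
set_option maxHeartbeats 1000000

noncomputable section

namespace GpQc

universe u

open SimpleGraph

/-! ### Basic metric notions on graphs -/

variable {V W : Type*}

/-! ### Graphs with a group action -/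

variable {G : Type u} [Group G]

variable {ι : Type u}

/-- A finite index subgroup of a `(G,𝒫)`-quasiconvex subgroup is `(G,𝒫)`-quasiconvex. -/
theorem finite_index_quasiconvex
    {G : Type u} [Group G]
    {ι : Type u} [Finite ι] (P : ι → Subgroup G)
    (hPinf : ∀ i, ((P i : Set G)).Infinite)
    (hPhe : ∃ X : Set G, HypEmb P X)
    (H H' : Subgroup G) (hqc : IsGPQuasiconvex P H)
    (hle : H' ≤ H) (hfin : H'.relIndex H ≠ 0) :
    IsGPQuasiconvex P H' := by
  obtain ⟨A, hA, L, hne, hconn, hinv, hadjinv, hqi, hfinorb⟩ := hqc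
  refine ⟨A, hA, L, hne, hconn,
    fun h hh v hv => hinv h (hle hh) v hv,
    fun h hh a b hab => hadjinv h (hle hh) a b hab, hqi, ?_⟩
  -- Finitely many `H'`-orbits of vertices of `L`.
  set K : Subgroup ↥H := H'.subgroupOf H with hK
  haveI : K.FiniteIndex := ⟨hfin⟩
  haveI : Finite (↥H ⧸ K) := Subgroup.finite_quotient_of_finiteIndex (H := K)
  set Q := Quotient (A.suborbitSetoid H L.verts) with hQ
  haveI : Finite Q := hfinorb
  refine Finite.of_surjective
    (fun p : Q × (↥H ⧸ K) =>
      Quotient.mk (A.suborbitSetoid H' L.verts)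
        ⟨A.smul (((p.2.out⁻¹ : ↥H) : G)) (p.1.out : A.V),
          hinv _ (p.2.out⁻¹).2 _ (p.1.out).2⟩) ?_
  intro q
  induction q using Quotient.inductionOn with
  | h s =>
    set o : Q := Quotient.mk (A.suborbitSetoid H L.verts) s with ho
    have hrel : (A.suborbitSetoid H L.verts).r o.out s := by
      apply Quotient.exact (s := A.suborbitSetoid H L.verts)
      rw [Quotient.out_eq]
    obtain ⟨h, hh, hhs⟩ := hrel
    set hh0 : ↥H := ⟨h, hh⟩ with hhh0
    set c : ↥H ⧸ K := QuotientGroup.mk hh0⁻¹ with hc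
    refine ⟨(o, c), ?_⟩
    have hout : QuotientGroup.mk (s := K) c.out = QuotientGroup.mk hh0⁻¹ :=
      Quotient.out_eq c
    rw [QuotientGroup.eq] at hout
    set k : ↥H := c.out⁻¹ * hh0⁻¹ with hk
    have hkK : k ∈ K := hout
    have hco : c.out⁻¹ = k * hh0 := by
      rw [hk]
      group
    have hkey : A.smul ((c.out⁻¹ : ↥H) : G) (o.out : A.V) =
        A.smul ((k : ↥H) : G) (s : A.V) := by
      rw [hco]
      push_cast
      rw [A.mul_smul', hhs]
    apply Quotient.sound
    refine ⟨((k⁻¹ : ↥H) : G), H'.inv_mem (Subgroup.mem_subgroupOf.mp hkK), ?_⟩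
    show A.smul ((k⁻¹ : ↥H) : G)
        (A.smul ((c.out⁻¹ : ↥H) : G) ((o.out : ↑L.verts) : A.V)) = (s : A.V)
    rw [hkey, ← A.mul_smul']
    have h1 : ((k⁻¹ : ↥H) : G) * ((k : ↥H) : G) = 1 := by
      push_cast
      group
    rw [h1, A.one_smul']

end GpQc
end
end
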